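/- arXiv:1410.3452 — 3 statements merged into one kernel-verified Lean document; each statement's English description precedes it below -/
import Mathlib

section
/- The family of Haar meager subsets of an abelian Polish group forms a σ-ideal: it contains the empty set, is closed under taking subsets, and is closed under countable unions. -/
open Set Pointwise MeasureTheory

/-- A set is Haar meager (Darji) if it is contained in a Borel set `B` such that some
continuous map from a nonempty compact metric space pulls back every translate of `B`
to a meager set. -/
def HaarMeager {X : Type*} [AddCommGroup X] [TopologicalSpace X] (A : Set X) : Prop :=
  ∃ B : Set X, A ⊆ B ∧ MeasurableSet[borel X] B ∧
    ∃ (K : Type) (_ : MetricSpace K) (_ : CompactSpace K) (_ : Nonempty K) (f : K → X),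
      Continuous f ∧ ∀ x : X, IsMeagre (f ⁻¹' (B + {x}))

/-- A set is D-measurable if it is the union of a Borel set and a Haar meager set. -/
def DMeasurable {X : Type*} [AddCommGroup X] [TopologicalSpace X] (A : Set X) : Prop :=
  ∃ B M : Set X, MeasurableSet[borel X] B ∧ HaarMeager M ∧ A = B ∪ M

/-! Choose witnesses `fₙ : Kₙ → X` for Borel sets `Bₙ ⊇ sₙ`, restrict each `fₙ` to the closure of a
small open set `Uₙ ∋ k⁰ₙ`, and sum the series `F k = ∑ₙ (fₙ kₙ - fₙ k⁰ₙ)` on the compact product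
`∏ₙ closure Uₙ`. Choosing the `Uₙ` one after the other, so small that the `n`-th term moves the
(compact) set of possible partial sums by less than `2⁻ⁿ`, makes the partial sums converge
uniformly. Along the `n`-th coordinate `F` is a translate of `fₙ`, so every section of
`F⁻¹(Bₙ + x)` in that direction is meager, and by the Kuratowski–Ulam theorem so is
`F⁻¹(Bₙ + x)`. -/

open Function Filter Topology

section KuratowskiUlam

open TopologicalSpace

variable {α β : Type*} [TopologicalSpace α] [TopologicalSpace β] [SecondCountableTopology α]

lemma IsClosed.eventually_isNowhereDense_sections {F : Set (α × β)} (hF : IsClosed F)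
    (hF' : IsNowhereDense F) : ∀ᶠ y in residual β, IsNowhereDense {x | (x, y) ∈ F} := by
  have hFint : interior F = ∅ := hF.isNowhereDense_iff.mp hF'
  let D : Set α → Set β := fun V => Prod.snd '' ((V ×ˢ univ) \ F)
  have hD : ∀ V ∈ countableBasis α, D V ∈ residual β := by
    intro V hV
    have hVo := isOpen_of_mem_countableBasis hV
    refine residual_of_dense_open (isOpenMap_snd _ ((hVo.prod isOpen_univ).sdiff hF)) ?_
    refine dense_iff_inter_open.2 fun W hW ⟨y, hy⟩ => ?_
    obtain ⟨⟨x', y'⟩, hxy, hxyF⟩ := not_subset.1 fun hsub : V ×ˢ W ⊆ F =>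
      ((nonempty_of_mem_countableBasis hV).prod ⟨y, hy⟩).ne_empty
        (subset_empty_iff.1 (hFint ▸ interior_maximal hsub (hVo.prod hW)))
    exact ⟨y', hxy.2, ⟨x', y'⟩, ⟨⟨hxy.1, trivial⟩, hxyF⟩, rfl⟩
  filter_upwards [(countable_bInter_mem (countable_countableBasis α)).2 hD] with y hy
  have hcl : IsClosed {x | (x, y) ∈ F} := hF.preimage (Continuous.prodMk_left y)
  rw [hcl.isNowhereDense_iff, interior_eq_empty_iff_dense_compl,
    (isBasis_countableBasis α).dense_iff]
  intro V hV _
  obtain ⟨⟨x, _⟩, ⟨⟨hxV, -⟩, hxF⟩, rfl⟩ := mem_iInter₂.1 hy V hV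
  exact ⟨x, hxV, hxF⟩

lemma IsMeagre.eventually_isMeagre_sections {M : Set (α × β)} (hM : IsMeagre M) :
    ∀ᶠ y in residual β, IsMeagre {x | (x, y) ∈ M} := by
  obtain ⟨S, hS, hSc, hMS⟩ := isMeagre_iff_countable_union_isNowhereDense.1 hM
  have hsec : ∀ t ∈ S, ∀ᶠ y in residual β, IsNowhereDense {x | (x, y) ∈ closure t} :=
    fun t ht => isClosed_closure.eventually_isNowhereDense_sections (hS t ht).closure
  filter_upwards [(countable_bInter_mem hSc).2 hsec] with y hy
  refine isMeagre_iff_countable_union_isNowhereDense.2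
    ⟨(fun t => {x | (x, y) ∈ closure t}) '' S, forall_mem_image.2 fun t ht => mem_iInter₂.1 hy t ht,
      hSc.image _, fun x hx => ?_⟩
  obtain ⟨t, ht, hxt⟩ := mem_sUnion.1 (hMS hx)
  exact ⟨_, mem_image_of_mem _ ht, subset_closure hxt⟩

lemma BaireMeasurableSet.isMeagre_of_forall_isMeagre_sections [BaireSpace α] [BaireSpace β]
    {E : Set (α × β)} (hE : BaireMeasurableSet E) (hsec : ∀ y, IsMeagre {x | (x, y) ∈ E}) :
    IsMeagre E := by
  obtain ⟨U, hU, hEU⟩ := hE.residualEq_isOpen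
  have hdiff : IsMeagre (symmDiff E U) := by
    refine mem_of_superset hEU fun p hp => ?_
    simp only [mem_ofPred_eq, eq_iff_iff] at hp
    simp only [mem_compl_iff, mem_symmDiff]
    tauto
  suffices U = ∅ from hdiff.mono fun p hp => Or.inl ⟨hp, by simp [this]⟩
  refine eq_empty_iff_forall_notMem.2 fun ⟨x₀, y₀⟩ hp => ?_
  obtain ⟨V, W, hV, hW, hxV, hyW, hVW⟩ := isOpen_prod_iff.1 hU x₀ y₀ hp
  obtain ⟨y, hyW', hy⟩ :=
    (dense_of_mem_residual hdiff.eventually_isMeagre_sections).inter_open_nonempty W hW ⟨y₀, hyW⟩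
  -- over `y ∈ W`, the open set `V` lies in the section of `E ∪ (E ∆ U)`
  refine not_isMeagre_of_isOpen hV ⟨x₀, hxV⟩ (((hsec y).union hy).mono fun x hx => ?_)
  by_cases hxE : (x, y) ∈ E
  · exact Or.inl hxE
  · exact Or.inr (Or.inr ⟨hVW ⟨hx, hyW'⟩, hxE⟩)

end KuratowskiUlam

lemma IsMeagre.preimage_val_closure {γ : Type*} [TopologicalSpace γ] {U M : Set γ}
    (hU : IsOpen U) (hM : IsMeagre M) : IsMeagre ((↑) ⁻¹' M : Set (closure U)) := by
  set V : Set (closure U) := (↑) ⁻¹' U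
  have hV : IsMeagre Vᶜ := by
    rw [IsMeagre, compl_compl]
    refine residual_of_dense_open (hU.preimage continuous_subtype_val) (Subtype.dense_iff.2 ?_)
    rw [Subtype.image_preimage_coe, inter_eq_right.2 subset_closure]
  have hMU : IsMeagre ((↑) ⁻¹' M : Set U) :=
    hM.preimage_of_isOpenMap continuous_subtype_val hU.isOpenMap_subtype_val
  refine (((IsEmbedding.inclusion subset_closure).isInducing.isMeagre_image hMU).union hV).mono
    fun x hx => ?_
  by_cases hxU : (x : γ) ∈ U
  · exact Or.inl ⟨⟨x, hxU⟩, hx, rfl⟩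
  · exact Or.inr hxU

lemma Homeomorph.piSplitAt_symm_eq_update {ι : Type*} [DecidableEq ι] (i : ι) {Y : ι → Type*}
    [∀ j, TopologicalSpace (Y j)] (a a' : Y i) (r : ∀ j : {j // j ≠ i}, Y j) :
    (piSplitAt i Y).symm (a, r) = update ((piSplitAt i Y).symm (a', r)) i a := by
  funext j
  by_cases hj : j = i
  · subst hj; simp
  · simp [hj]

lemma BaireMeasurableSet.isMeagre_of_forall_isMeagre_update {ι : Type*} [DecidableEq ι]
    {Y : ι → Type*} [∀ j, TopologicalSpace (Y j)] [∀ j, CompactSpace (Y j)] [∀ j, T2Space (Y j)]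
    (i : ι) [SecondCountableTopology (Y i)] {E : Set (∀ j, Y j)} (hE : BaireMeasurableSet E)
    (hsec : ∀ k, IsMeagre {a | update k i a ∈ E}) : IsMeagre E := by
  set e := Homeomorph.piSplitAt i Y
  have hE' : IsMeagre (e.symm ⁻¹' E) := by
    refine (hE.preimage e.symm.continuous e.symm.isOpenMap).isMeagre_of_forall_isMeagre_sections
      fun r => ?_
    rcases eq_empty_or_nonempty {a | (a, r) ∈ e.symm ⁻¹' E} with h | ⟨a', -⟩
    · exact h ▸ IsMeagre.empty
    · convert hsec (e.symm (a', r)) using 3 with a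
      exact iff_of_eq (congrArg (· ∈ E) (Homeomorph.piSplitAt_symm_eq_update i a a' r))
  simpa [← preimage_comp] using hE'.preimage_of_isOpenMap e.continuous e.isOpenMap

lemma IsCompact.eventually_forall_dist_add_lt {X : Type*} [PseudoMetricSpace X] [AddZeroClass X]
    [ContinuousAdd X] {S : Set X} (hS : IsCompact S) {ε : ℝ} (hε : 0 < ε) :
    ∀ᶠ v in 𝓝 0, ∀ z ∈ S, dist (z + v) z < ε :=
  hS.eventually_forall_of_forall_eventually fun z _ =>
    ContinuousAt.eventually_lt (by fun_prop) continuousAt_const (by simpa using hε)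

lemma exists_isOpen_forall_closure_dist_add_sub_lt {K X : Type*} [TopologicalSpace K]
    [RegularSpace K] [PseudoMetricSpace X] [AddGroup X] [IsTopologicalAddGroup X] {S : Set X}
    (hS : IsCompact S) {f : K → X} (hf : Continuous f) (k₀ : K) {ε : ℝ} (hε : 0 < ε) :
    ∃ U, IsOpen U ∧ k₀ ∈ U ∧ ∀ a ∈ closure U, ∀ z ∈ S, dist (z + (f a - f k₀)) z < ε := by
  have hlim : Tendsto (fun a => f a - f k₀) (𝓝 k₀) (𝓝 0) := by
    simpa using (hf.tendsto k₀).sub_const (f k₀)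
  obtain ⟨N, ⟨hN, hNc⟩, hNS⟩ :=
    (closed_nhds_basis k₀).mem_iff.1 (hlim.eventually (hS.eventually_forall_dist_add_lt hε))
  exact ⟨interior N, isOpen_interior, mem_interior_iff_mem_nhds.2 hN,
    fun a ha => hNS (closure_minimal interior_subset hNc ha)⟩

lemma Finset.sum_apply_update_sub {ι X : Type*} [DecidableEq ι] [AddCommGroup X] {K : ι → Type*}
    (g : ∀ i, K i → X) (k : ∀ i, K i) {s : Finset ι} {i : ι} (hi : i ∈ s) (a : K i) :
    ∑ j ∈ s, g j (update k i a j) = ∑ j ∈ s, g j (k j) + (g i a - g i (k i)) := by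
  rw [Finset.sum_eq_add_sum_sdiff_singleton_of_mem hi (fun j => g j (k j))]
  simp only [apply_update, Finset.sum_update_of_mem hi]
  abel

theorem exists_continuous_pi_closure_update {X : Type*} [MetricSpace X] [CompleteSpace X]
    [AddCommGroup X] [IsTopologicalAddGroup X] {K : ℕ → Type*} [∀ n, TopologicalSpace (K n)]
    [∀ n, CompactSpace (K n)] [∀ n, RegularSpace (K n)] {f : ∀ n, K n → X}
    (hf : ∀ n, Continuous (f n)) (k₀ : ∀ n, K n) :
    ∃ U : ∀ n, Set (K n), (∀ n, IsOpen (U n) ∧ k₀ n ∈ U n) ∧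
      ∃ F : C(∀ n, closure (U n), X), ∀ n k a, F (update k n a) = F k + (f n a - f n (k n)) := by
  choose! U hUo hU₀ hU using fun n (S : Set X) (hS : IsCompact S) =>
    exists_isOpen_forall_closure_dist_add_sub_lt hS (hf n) (k₀ n) (pow_pos one_half_pos n)
  let g n a := f n a - f n (k₀ n)
  -- `T N` is a compact set containing every partial sum `∑ m < N, g m (k m)`
  let T : ℕ → Set X := fun n => Nat.rec {0} (fun m S => S + g m '' closure (U m S)) n
  have hT : ∀ n, IsCompact (T n) := fun n => Nat.rec isCompact_singleton
    (fun m ih => ih.add (isClosed_closure.isCompact.image ((hf m).sub continuous_const))) n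
  refine ⟨fun n => U n (T n), fun n => ⟨hUo n _ (hT n), hU₀ n _ (hT n)⟩, ?_⟩
  have (n : ℕ) : CompactSpace (closure (U n (T n))) :=
    isCompact_iff_compactSpace.1 isClosed_closure.isCompact
  let S : ℕ → C(∀ n, closure (U n (T n)), X) := fun N =>
    ⟨fun k => ∑ m ∈ Finset.range N, g m (k m), by fun_prop⟩
  have hST : ∀ N k, S N k ∈ T N := by
    intro N k
    induction N with
    | zero => simp [S, T]
    | succ N ih =>
      simpa [S, Finset.sum_range_succ] using add_mem_add ih (mem_image_of_mem (g N) (k N).2)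
  have hdist : ∀ N, dist (S N) (S (N + 1)) ≤ 1 * (1 / 2) ^ N := fun N =>
    (ContinuousMap.dist_le (by positivity)).2 fun k => by
      simpa [S, Finset.sum_range_succ, dist_comm] using (hU N _ (hT N) _ (k N).2 _ (hST N k)).le
  obtain ⟨F, hF⟩ :=
    cauchySeq_tendsto_of_complete (cauchySeq_of_le_geometric _ _ one_half_lt_one hdist)
  have hlim : ∀ k, Tendsto (fun N => S N k) atTop (𝓝 (F k)) := fun k =>
    ((continuous_eval_const k).tendsto F).comp hF
  refine ⟨F, fun n k a => tendsto_nhds_unique (hlim _) ?_⟩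
  have hS : ∀ N, n < N → S N (update k n a) = S N k + (f n a - f n (k n)) := fun N hN => by
    simp only [S, ContinuousMap.coe_mk]
    rw [Finset.sum_apply_update_sub (fun m (x : closure (U m (T m))) => g m x) k
      (Finset.mem_range.2 hN), sub_sub_sub_cancel_right]
  exact ((hlim k).add_const _).congr' ((eventually_gt_atTop n).mono fun N hN => (hS N hN).symm)

lemma Set.add_singleton_eq_preimage_sub {X : Type*} [AddGroup X] (B : Set X) (x : X) :
    B + {x} = (· - x) ⁻¹' B := by
  simp [add_singleton, image_add_right, sub_eq_add_neg]

lemma haarMeager_empty {X : Type*} [AddCommGroup X] [TopologicalSpace X] :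
    HaarMeager (∅ : Set X) :=
  ⟨∅, subset_rfl, @MeasurableSet.empty X (borel X), PUnit, inferInstance, inferInstance,
    inferInstance, fun _ => 0, continuous_const, fun _ => by simpa using IsMeagre.empty⟩

lemma HaarMeager.mono {X : Type*} [AddCommGroup X] [TopologicalSpace X] {A B : Set X}
    (hAB : A ⊆ B) (hB : HaarMeager B) : HaarMeager A :=
  let ⟨C, hBC, hC, hK⟩ := hB
  ⟨C, hAB.trans hBC, hC, hK⟩

theorem HaarMeager.iUnion {X : Type*} [AddCommGroup X] [TopologicalSpace X]
    [IsTopologicalAddGroup X] [PolishSpace X] {s : ℕ → Set X} (hs : ∀ n, HaarMeager (s n)) :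
    HaarMeager (⋃ n, s n) := by
  choose B hsB hB K _ _ hK f hf hfB using hs
  let := TopologicalSpace.upgradeIsCompletelyMetrizable X
  obtain ⟨U, hU, F, hF⟩ := exists_continuous_pi_closure_update hf fun n => (hK n).some
  have (n : ℕ) : CompactSpace (closure (U n)) :=
    isCompact_iff_compactSpace.1 isClosed_closure.isCompact
  let : MetricSpace (∀ n, closure (U n)) := PiCountable.metricSpace
  refine ⟨⋃ n, B n, iUnion_mono hsB, MeasurableSet.iUnion hB, ∀ n, closure (U n), inferInstance,
    inferInstance, ⟨fun n => ⟨_, subset_closure (hU n).2⟩⟩, F, F.continuous, fun x => ?_⟩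
  rw [iUnion_add, preimage_iUnion]
  refine isMeagre_iUnion fun n => BaireMeasurableSet.isMeagre_of_forall_isMeagre_update n ?_
    fun k => ?_
  · borelize X (∀ n, closure (U n))
    rw [add_singleton_eq_preimage_sub, ← preimage_comp]
    exact ((F.continuous.sub continuous_const).measurable (hB n)).baireMeasurableSet
  · -- along the `n`-th coordinate, `F` is `f n` followed by a translation
    refine ((hfB n (x - (F k - f n (k n)))).preimage_val_closure (hU n).1).mono fun a ha => ?_
    simp only [mem_ofPred_eq, mem_preimage, hF, add_singleton_eq_preimage_sub] at ha ⊢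
    convert ha using 1
    abel

theorem haarMeager_sigma_ideal (X : Type*) [AddCommGroup X] [TopologicalSpace X]
    [IsTopologicalAddGroup X] [PolishSpace X] :
    HaarMeager (∅ : Set X) ∧
      (∀ A B : Set X, A ⊆ B → HaarMeager B → HaarMeager A) ∧
      (∀ s : ℕ → Set X, (∀ n, HaarMeager (s n)) → HaarMeager (⋃ n, s n)) :=
  ⟨haarMeager_empty, fun _ _ hAB hB => hB.mono hAB, fun _ => HaarMeager.iUnion⟩
end

section
/- If A is a D-measurable, non-Haar-meager subset of an abelian Polish group X, then 0 is an interior point of A − A. -/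
open Set Pointwise MeasureTheory

/-!
If `C` is Borel and `0 ∉ interior (C - C)`, choose `x n ∉ C - C` so small that the sums `F ε`
of the `x n` with `ε n = true` converge and depend continuously on `ε : ℕ → Bool`. Changing one
coordinate of `ε` moves `F ε` by `± x n`, so no two points of `F ⁻¹' (C + {z})` differ in exactly
one coordinate. A Baire measurable subset of Cantor space with this property is meagre, since it
would be comeagre in some cylinder, and so would its image under flipping a coordinate not fixed
by that cylinder. Hence `C` is Haar meagre. Haar meagre sets are closed under unions (take
`f₁ + f₂` on `K₁ × K₂` and apply Kuratowski–Ulam), so `A = B ∪ M` with `0 ∉ interior (A - A)`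
would be Haar meagre, as then `0 ∉ interior (B - B)`.
-/

open Filter Topology TopologicalSpace Function PiNat

section Baire

variable {α β : Type*} [TopologicalSpace α] [TopologicalSpace β]

lemma Continuous.baireMeasurableSet_preimage {f : α → β} (hf : Continuous f) {s : Set β}
    (hs : MeasurableSet[borel β] s) : BaireMeasurableSet (f ⁻¹' s) := by
  borelize α β
  exact (hf.measurable hs).baireMeasurableSet

lemma BaireMeasurableSet.exists_isOpen_residualEq_of_not_isMeagre {s : Set α}
    (hs : BaireMeasurableSet s) (h : ¬ IsMeagre s) :
    ∃ u : Set α, IsOpen u ∧ u.Nonempty ∧ s =ᵇ u := by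
  obtain ⟨u, hu, hsu⟩ := hs.residualEq_isOpen
  rcases u.eq_empty_or_nonempty with rfl | hne
  · exact absurd (eventuallyEq_empty.1 hsu) h
  · exact ⟨u, hu, hne, hsu⟩

lemma IsOpen.eventually_residual_dense_preimage_prodMk_left [SecondCountableTopology β]
    {u : Set (α × β)} (hu : IsOpen u) (hd : Dense u) :
    ∀ᶠ x in residual α, Dense (Prod.mk x ⁻¹' u) := by
  have hbasic : ∀ v ∈ countableBasis β, ∀ᶠ x in residual α, (v ∩ Prod.mk x ⁻¹' u).Nonempty := by
    intro v hv
    have hvo := isOpen_of_mem_countableBasis hv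
    refine mem_of_superset (residual_of_dense_open
      (isOpenMap_fst _ (hu.inter (isOpen_univ.prod hvo))) ?_) ?_
    · refine dense_iff_inter_open.2 fun g hg hgne => ?_
      obtain ⟨z, ⟨hzg, hzv⟩, hzu⟩ := hd.inter_open_nonempty _ (hg.prod hvo)
        (hgne.prod (nonempty_of_mem_countableBasis hv))
      exact ⟨z.1, hzg, z, ⟨hzu, trivial, hzv⟩, rfl⟩
    · rintro _ ⟨z, ⟨hzu, -, hzv⟩, rfl⟩
      exact ⟨z.2, hzv, hzu⟩
  filter_upwards [(eventually_countable_ball (countable_countableBasis β)).2 hbasic] with x hx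
  exact (isBasis_countableBasis β).dense_iff.2 fun v hv _ => hx v hv

lemma curry_residual_le_residual_prod [SecondCountableTopology β] :
    (residual α).curry (residual β) ≤ residual (α × β) := by
  refine le_countableGenerate_iff_of_countableInterFilter.2 ?_
  rintro u ⟨hu, hd⟩
  rw [Filter.mem_sets, mem_curry_iff]
  filter_upwards [hu.eventually_residual_dense_preimage_prodMk_left hd] with x hx
  exact residual_of_dense_open (hu.preimage (Continuous.prodMk_right x)) hx

lemma BaireMeasurableSet.isMeagre_of_eventually_isMeagre_preimage_prodMk_left [BaireSpace α]
    [BaireSpace β] [SecondCountableTopology β] {s : Set (α × β)} (hs : BaireMeasurableSet s)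
    (h : ∀ᶠ x in residual α, IsMeagre (Prod.mk x ⁻¹' s)) : IsMeagre s := by
  by_contra hns
  obtain ⟨u, hu, ⟨z, hz⟩, hsu⟩ := hs.exists_isOpen_residualEq_of_not_isMeagre hns
  have hsec : ∀ᶠ x in residual α, ∀ᶠ y in residual β, (x, y) ∈ s ↔ (x, y) ∈ u :=
    mem_curry_iff.1 (curry_residual_le_residual_prod (eventuallyEq_set.1 hsu))
  obtain ⟨_, ⟨w, hw, rfl⟩, hwu, hws⟩ := (dense_of_mem_residual (hsec.and h)).inter_open_nonempty
    (Prod.fst '' u) (isOpenMap_fst u hu) ⟨z.1, z, hz, rfl⟩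
  refine not_isMeagre_of_isOpen (hu.preimage (Continuous.prodMk_right w.1)) ⟨w.2, hw⟩ ?_
  filter_upwards [hwu, hws] with y hsu hs using mt hsu.2 hs

lemma BaireMeasurableSet.isMeagre_of_eventually_isMeagre_preimage_prodMk_right [BaireSpace α]
    [BaireSpace β] [SecondCountableTopology α] {s : Set (α × β)} (hs : BaireMeasurableSet s)
    (h : ∀ᶠ y in residual β, IsMeagre ((·, y) ⁻¹' s)) : IsMeagre s := by
  have hswap : IsMeagre (Prod.swap ⁻¹' s) :=
    (hs.preimage continuous_swap (Homeomorph.prodComm β α).isOpenMap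
      ).isMeagre_of_eventually_isMeagre_preimage_prodMk_left h
  simpa [preimage_preimage] using
    hswap.preimage_of_isOpenMap continuous_swap (Homeomorph.prodComm α β).isOpenMap

end Baire

lemma continuous_update_not (n : ℕ) : Continuous fun ε : ℕ → Bool => update ε n (!ε n) :=
  continuous_id.update n ((continuous_of_discreteTopology (f := not)).comp (continuous_apply n))

lemma isOpenMap_update_not (n : ℕ) : IsOpenMap fun ε : ℕ → Bool => update ε n (!ε n) := by
  have hinv : Involutive fun ε : ℕ → Bool => update ε n (!ε n) := fun ε => by simp
  intro u hu
  rw [image_eq_preimage_of_inverse hinv.leftInverse hinv.rightInverse]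
  exact hu.preimage (continuous_update_not n)

lemma BaireMeasurableSet.isMeagre_of_forall_update_not_notMem {T : Set (ℕ → Bool)}
    (hT : BaireMeasurableSet T) (h : ∀ ε ∈ T, ∀ n, update ε n (!ε n) ∉ T) : IsMeagre T := by
  by_contra hne
  obtain ⟨u, hu, ⟨ε₀, hε₀⟩, hTu⟩ := hT.exists_isOpen_residualEq_of_not_isMeagre hne
  -- `T` is comeagre in a cylinder `cylinder y m`, and so is its image under flipping the
  -- coordinate `m`, which preserves that cylinder.
  obtain ⟨_, ⟨y, m, rfl⟩, -, hcyl⟩ :=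
    (isTopologicalBasis_cylinders _).exists_subset_of_mem_open hε₀ hu
  have hmaps : MapsTo (fun ε : ℕ → Bool => update ε m (!ε m)) (cylinder y m) (cylinder y m) :=
    fun ε hε => mem_cylinder_iff_eq.1 hε ▸ update_mem_cylinder ε m _
  have hres : ∀ᶠ ε in residual _,
      (ε ∈ T ↔ ε ∈ u) ∧ (update ε m (!ε m) ∈ T ↔ update ε m (!ε m) ∈ u) :=
    (eventuallyEq_set.1 hTu).and <| tendsto_residual_of_isOpenMap (continuous_update_not m)
      (isOpenMap_update_not m) (eventuallyEq_set.1 hTu)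
  obtain ⟨ε, hε, hεT, hflipT⟩ := (dense_of_mem_residual hres).inter_open_nonempty _
    (isOpen_cylinder _ y m) ⟨y, self_mem_cylinder y m⟩
  exact h ε (hεT.2 (hcyl hε)) m (hflipT.2 (hcyl (hmaps hε)))

section CantorSum

variable {X : Type*}

def cantorPartialSum [AddCommMonoid X] (x : ℕ → X) (n : ℕ) (ε : ℕ → Bool) : X :=
  ∑ i ∈ Finset.range n, if ε i then x i else 0

lemma cantorPartialSum_succ [AddCommMonoid X] (x : ℕ → X) (n : ℕ) (ε : ℕ → Bool) :
    cantorPartialSum x (n + 1) ε = cantorPartialSum x n ε + if ε n then x n else 0 :=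
  Finset.sum_range_succ _ n

lemma cantorPartialSum_update_true [AddCommMonoid X] (x : ℕ → X) {ε : ℕ → Bool} {n m : ℕ}
    (hn : ε n = false) (hm : n < m) :
    cantorPartialSum x m (update ε n true) = cantorPartialSum x m ε + x n := by
  have hmem : n ∈ Finset.range m := Finset.mem_range.2 hm
  unfold cantorPartialSum
  rw [← Finset.add_sum_erase _ _ hmem, ← Finset.add_sum_erase _ _ hmem,
    Finset.sum_congr rfl fun i hi => by rw [update_of_ne (Finset.ne_of_mem_erase hi)]]
  simp [hn, add_comm]

lemma continuous_cantorPartialSum [AddCommMonoid X] [TopologicalSpace X] [ContinuousAdd X]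
    (x : ℕ → X) (n : ℕ) : Continuous (cantorPartialSum x n) :=
  continuous_finsetSum _ fun i _ =>
    (continuous_of_discreteTopology (f := fun b : Bool => if b then x i else 0)).comp
      (continuous_apply i)

variable [AddCommMonoid X] [MetricSpace X] {x : ℕ → X}

noncomputable def cantorSum (x : ℕ → X) (ε : ℕ → Bool) : X :=
  limUnder atTop fun n => cantorPartialSum x n ε

lemma dist_cantorPartialSum_succ_le
    (hx : ∀ n ε, dist (cantorPartialSum x n ε) (cantorPartialSum x n ε + x n) ≤ 1 / 2 ^ n)
    (ε : ℕ → Bool) (n : ℕ) :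
    dist (cantorPartialSum x n ε) (cantorPartialSum x (n + 1) ε) ≤ 2 / 2 / 2 ^ n := by
  rw [cantorPartialSum_succ, div_self two_ne_zero]
  split_ifs
  · exact hx n ε
  · simp

variable [CompleteSpace X]

lemma tendsto_cantorPartialSum
    (hx : ∀ n ε, dist (cantorPartialSum x n ε) (cantorPartialSum x n ε + x n) ≤ 1 / 2 ^ n)
    (ε : ℕ → Bool) :
    Tendsto (fun n => cantorPartialSum x n ε) atTop (𝓝 (cantorSum x ε)) :=
  (cauchySeq_of_le_geometric_two (dist_cantorPartialSum_succ_le hx ε)).tendsto_limUnder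

lemma tendstoUniformly_cantorPartialSum
    (hx : ∀ n ε, dist (cantorPartialSum x n ε) (cantorPartialSum x n ε + x n) ≤ 1 / 2 ^ n) :
    TendstoUniformly (cantorPartialSum x) (cantorSum x) atTop := by
  have hbound : ∀ n ε, dist (cantorPartialSum x n ε) (cantorSum x ε) ≤ 2 / 2 ^ n :=
    fun n ε => dist_le_of_le_geometric_two_of_tendsto (dist_cantorPartialSum_succ_le hx ε)
      (tendsto_cantorPartialSum hx ε) n
  have hlim : Tendsto (fun n : ℕ => 2 / (2 : ℝ) ^ n) atTop (𝓝 0) := by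
    simpa [div_eq_mul_inv] using (tendsto_inv_atTop_zero.comp
      (tendsto_pow_atTop_atTop_of_one_lt (one_lt_two (α := ℝ)))).const_mul 2
  refine Metric.tendstoUniformly_iff.2 fun δ hδ => ?_
  filter_upwards [hlim.eventually (gt_mem_nhds hδ)] with n hn ε
  exact (dist_comm (cantorSum x ε) _ ▸ hbound n ε).trans_lt hn

lemma continuous_cantorSum [ContinuousAdd X]
    (hx : ∀ n ε, dist (cantorPartialSum x n ε) (cantorPartialSum x n ε + x n) ≤ 1 / 2 ^ n) :
    Continuous (cantorSum x) :=
  (tendstoUniformly_cantorPartialSum hx).continuous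
    (Frequently.of_forall (continuous_cantorPartialSum x))

lemma cantorSum_update_true [ContinuousAdd X]
    (hx : ∀ n ε, dist (cantorPartialSum x n ε) (cantorPartialSum x n ε + x n) ≤ 1 / 2 ^ n)
    {ε : ℕ → Bool} {n : ℕ} (hn : ε n = false) :
    cantorSum x (update ε n true) = cantorSum x ε + x n :=
  tendsto_nhds_unique (tendsto_cantorPartialSum hx _) <|
    ((tendsto_cantorPartialSum hx ε).add_const (x n)).congr' <|
      (eventually_gt_atTop n).mono fun _ hm => (cantorPartialSum_update_true x hn hm).symm

end CantorSum

section Translates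

variable {X : Type*} [AddCommGroup X]

lemma add_mem_add_singleton_iff {s : Set X} {a b c : X} : a + b ∈ s + {c} ↔ a ∈ s + {c - b} := by
  simp only [add_singleton, image_add_right, mem_preimage]
  rw [show a + -(c - b) = a + b + -c by abel]

lemma sub_mem_sub_of_mem_add_singleton {s : Set X} {a b c : X} (ha : a ∈ s + {c})
    (hb : b ∈ s + {c}) : a - b ∈ s - s := by
  rw [add_singleton] at ha hb
  obtain ⟨a, ha, rfl⟩ := ha
  obtain ⟨b, hb, rfl⟩ := hb
  simpa using sub_mem_sub ha hb

lemma MeasurableSet.borel_add_singleton [TopologicalSpace X] [ContinuousAdd X] {s : Set X}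
    (hs : MeasurableSet[borel X] s) (a : X) : MeasurableSet[borel X] (s + {a}) := by
  rw [add_singleton, image_add_right]
  exact (continuous_add_const (-a)).borel_measurable hs

end Translates

lemma HaarMeager.union {X : Type*} [AddCommGroup X] [TopologicalSpace X] [ContinuousAdd X]
    {s t : Set X} (hs : HaarMeager s) (ht : HaarMeager t) : HaarMeager (s ∪ t) := by
  obtain ⟨B₁, hsB, hB₁, K₁, _, _, _, f₁, hf₁, h₁⟩ := hs
  obtain ⟨B₂, htB, hB₂, K₂, _, _, _, f₂, hf₂, h₂⟩ := ht
  have hf : Continuous fun p : K₁ × K₂ => f₁ p.1 + f₂ p.2 := by fun_prop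
  refine ⟨B₁ ∪ B₂, union_subset_union hsB htB, hB₁.union hB₂, K₁ × K₂, inferInstance,
    inferInstance, inferInstance, _, hf, fun x => ?_⟩
  rw [union_add, preimage_union]
  -- By Kuratowski–Ulam: each horizontal (vertical) section is a pullback of a translate of B₁ (B₂).
  refine .union ?_ ?_
  · refine (hf.baireMeasurableSet_preimage (hB₁.borel_add_singleton x)
      ).isMeagre_of_eventually_isMeagre_preimage_prodMk_right (.of_forall fun k₂ => ?_)
    convert h₁ (x - f₂ k₂) using 1
    ext k₁
    exact add_mem_add_singleton_iff
  · refine (hf.baireMeasurableSet_preimage (hB₂.borel_add_singleton x)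
      ).isMeagre_of_eventually_isMeagre_preimage_prodMk_left (.of_forall fun k₁ => ?_)
    convert h₂ (x - f₁ k₁) using 1
    ext k₂
    rw [mem_preimage, mem_preimage, add_comm (f₁ k₁)]
    exact add_mem_add_singleton_iff

def seqOfPrefix {α : Type*} (g : ∀ n, (Fin n → α) → α) (n : ℕ) : α :=
  g n fun i => seqOfPrefix g i

lemma exists_seq_forall_prefix {α : Type*} {P : ∀ n, (Fin n → α) → α → Prop}
    (h : ∀ n v, ∃ a, P n v a) : ∃ x : ℕ → α, ∀ n, P n (fun i => x i) (x n) := by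
  choose g hg using h
  exact ⟨seqOfPrefix g, fun n => by rw [seqOfPrefix]; exact hg n _⟩

lemma exists_seq_notMem_forall_dist_cantorPartialSum_le {X : Type*} [AddCommMonoid X]
    [MetricSpace X] [ContinuousAdd X] {D : Set X} (hD : (0 : X) ∉ interior D) :
    ∃ x : ℕ → X, (∀ n, x n ∉ D) ∧
      ∀ n ε, dist (cantorPartialSum x n ε) (cantorPartialSum x n ε + x n) ≤ 1 / 2 ^ n := by
  -- The `n`-th term only has to move the `2 ^ n` subset sums of the earlier terms a little.
  have hstep : ∀ n (v : Fin n → X), ∃ a, a ∉ D ∧ ∀ e : Fin n → Bool,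
      dist (∑ i, if e i then v i else 0) ((∑ i, if e i then v i else 0) + a) ≤ 1 / 2 ^ n := by
    intro n v
    have hnear : ∀ᶠ a in 𝓝 (0 : X), ∀ e : Fin n → Bool,
        dist (∑ i, if e i then v i else 0) ((∑ i, if e i then v i else 0) + a) < 1 / 2 ^ n :=
      eventually_all.2 fun e =>
        ((continuous_const.dist (continuous_const.add continuous_id)).tendsto' 0 0
          (by simp)).eventually (gt_mem_nhds (by positivity))
    have hfar : ∃ᶠ a in 𝓝 (0 : X), a ∉ D := not_eventually.1 (mt mem_interior_iff_mem_nhds.2 hD)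
    obtain ⟨a, haD, ha⟩ := (hfar.and_eventually hnear).exists
    exact ⟨a, haD, fun e => (ha e).le⟩
  obtain ⟨x, hx⟩ := exists_seq_forall_prefix hstep
  refine ⟨x, fun n => (hx n).1, fun n ε => ?_⟩
  simpa only [cantorPartialSum, Fin.sum_univ_eq_sum_range fun i => if ε i then x i else 0]
    using (hx n).2 fun i => ε i

lemma isMeagre_preimage_cantorSum_add_singleton {X : Type*} [AddCommGroup X] [MetricSpace X]
    [CompleteSpace X] [ContinuousAdd X] {x : ℕ → X}
    (hx : ∀ n ε, dist (cantorPartialSum x n ε) (cantorPartialSum x n ε + x n) ≤ 1 / 2 ^ n)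
    {C : Set X} (hC : MeasurableSet[borel X] C) (hxC : ∀ n, x n ∉ C - C) (z : X) :
    IsMeagre (cantorSum x ⁻¹' (C + {z})) := by
  refine ((continuous_cantorSum hx).baireMeasurableSet_preimage (hC.borel_add_singleton z)
    ).isMeagre_of_forall_update_not_notMem fun ε hε n hflip => hxC n ?_
  cases hεn : ε n with
  | false =>
    rw [hεn, Bool.not_false] at hflip
    simpa [cantorSum_update_true hx hεn] using sub_mem_sub_of_mem_add_singleton hflip hε
  | true =>
    rw [hεn, Bool.not_true] at hflip
    have hε' : update (update ε n false) n true = ε := by simp [← hεn]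
    have := cantorSum_update_true hx (ε := update ε n false) (n := n) (by simp)
    rw [hε'] at this
    simpa [this] using sub_mem_sub_of_mem_add_singleton hε hflip

lemma haarMeager_of_zero_notMem_interior_sub {X : Type*} [AddCommGroup X] [TopologicalSpace X]
    [ContinuousAdd X] [IsCompletelyMetrizableSpace X] {C : Set X}
    (hC : MeasurableSet[borel X] C) (h0 : (0 : X) ∉ interior (C - C)) : HaarMeager C := by
  let := upgradeIsCompletelyMetrizable X
  obtain ⟨x, hxC, hx⟩ := exists_seq_notMem_forall_dist_cantorPartialSum_le h0
  exact ⟨C, subset_rfl, hC, ℕ → Bool, PiNat.metricSpace, inferInstance, inferInstance,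
    cantorSum x, continuous_cantorSum hx, isMeagre_preimage_cantorSum_add_singleton hx hC hxC⟩

theorem zero_mem_interior_sub_of_dMeasurable_not_haarMeager
    (X : Type*) [AddCommGroup X] [TopologicalSpace X] [IsTopologicalAddGroup X]
    [PolishSpace X] (A : Set X) (hA : DMeasurable A) (hA' : ¬ HaarMeager A) :
    (0 : X) ∈ interior (A - A) := by
  obtain ⟨B, M, hB, hM, rfl⟩ := hA
  by_contra h0
  have hB0 : (0 : X) ∉ interior (B - B) := fun h =>
    h0 (interior_mono (sub_subset_sub subset_union_left subset_union_left) h)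
  exact hA' ((haarMeager_of_zero_notMem_interior_sub hB hB0).union hM)
end

section
/- Let X be a real linear Polish space, D ⊆ X a nonempty open convex set, and V ⊆ D a D-measurable midpoint convex set. Then the set of all ℚ₂-internal points of V is open. -/
open Set Pointwise MeasureTheory

/-- Dyadic rationals. -/
def Q2 : Set ℝ := {ρ | ∃ n m : ℤ, ρ = (n : ℝ) / 2 ^ m}

/-- `x₀` is a `ℚ₂`-internal point of `V`. -/
def Q2Internal {X : Type*} [AddCommGroup X] [Module ℝ X] (V : Set X) (x₀ : X) : Prop :=
  x₀ ∈ V ∧ ∀ x : X, ∃ ε > (0 : ℝ), ∀ ρ ∈ Q2, ρ ∈ Set.Ioo (-ε) ε → x₀ + ρ • x ∈ V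

/-! A `ℚ₂`-internal point `x₀` of `V` is an interior point. The set `W = {w | x₀ ± w ∈ V}` is
Baire measurable, because Haar meager sets are meagre (Kuratowski–Ulam), and it contains
`2⁻ⁿ • x` for every `x` and some `n`, so countably many dilates of `W` cover `X` and `W` is not
meagre. By Pettis' theorem `W - W` is a neighbourhood of `0`, and midpoint convexity puts
`x₀ + (W - W) / 2` inside `V`. Since interior points are clearly `ℚ₂`-internal, the set of
`ℚ₂`-internal points is `interior V`. -/

open Set Pointwise Topology Filter TopologicalSpace

section KuratowskiUlam

variable {α β : Type*} [TopologicalSpace α] [TopologicalSpace β]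

theorem eventually_residual_dense_slice [SecondCountableTopology β] {W : Set (α × β)}
    (hWo : IsOpen W) (hWd : Dense W) : ∀ᶠ a in residual α, Dense {b | (a, b) ∈ W} := by
  have hB := isBasis_countableBasis β
  have hmeets : ∀ o ∈ countableBasis β, ∀ᶠ a in residual α, (o ∩ {b | (a, b) ∈ W}).Nonempty := by
    intro o ho
    obtain ⟨b₀, hb₀⟩ := nonempty_of_mem_countableBasis ho
    have hopen : IsOpen {a : α | (o ∩ {b | (a, b) ∈ W}).Nonempty} := by
      have : {a : α | (o ∩ {b | (a, b) ∈ W}).Nonempty} = ⋃ b ∈ o, {a | (a, b) ∈ W} := by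
        ext a; simp [Set.Nonempty]
      rw [this]
      exact isOpen_biUnion fun b _ => hWo.preimage (Continuous.prodMk_left b)
    have hdense : Dense {a : α | (o ∩ {b | (a, b) ∈ W}).Nonempty} := by
      rw [dense_iff_inter_open]
      rintro A hA ⟨a, ha⟩
      obtain ⟨⟨a', b⟩, ⟨ha', hb⟩, hW⟩ :=
        hWd.inter_open_nonempty _ (hA.prod (hB.isOpen ho)) ⟨(a, b₀), ha, hb₀⟩
      exact ⟨a', ha', b, hb, hW⟩
    exact residual_of_dense_open hopen hdense
  filter_upwards [(eventually_countable_ball (countable_countableBasis β)).2 hmeets] with a ha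
  exact hB.dense_iff.2 fun o ho _ => ha o ho

theorem IsNowhereDense.eventually_residual_slice [SecondCountableTopology β]
    {F : Set (α × β)} (hF : IsNowhereDense F) :
    ∀ᶠ a in residual α, IsNowhereDense {b | (a, b) ∈ F} := by
  obtain ⟨hopen, hdense⟩ :=
    isClosed_isNowhereDense_iff_compl.1 ⟨isClosed_closure, hF.closure⟩
  filter_upwards [eventually_residual_dense_slice hopen hdense] with a ha
  have hclosed : IsClosed {b | (a, b) ∈ closure F} :=
    isClosed_closure.preimage (Continuous.prodMk_right a)
  exact IsNowhereDense.mono (s := {b | (a, b) ∈ closure F}) (fun b hb => subset_closure hb)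
    (isClosed_isNowhereDense_iff_compl.2 ⟨hclosed.isOpen_compl, ha⟩).2

theorem IsMeagre.eventually_residual_slice [SecondCountableTopology β]
    {S : Set (α × β)} (hS : IsMeagre S) :
    ∀ᶠ a in residual α, IsMeagre {b | (a, b) ∈ S} := by
  obtain ⟨𝒮, hnd, hcount, hsub⟩ := isMeagre_iff_countable_union_isNowhereDense.1 hS
  filter_upwards [(eventually_countable_ball hcount).2
    fun t ht => (hnd t ht).eventually_residual_slice] with a ha
  refine (isMeagre_biUnion hcount fun t ht => (ha t ht).isMeagre).mono fun b hb => ?_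
  obtain ⟨t, ht, hbt⟩ := hsub hb
  exact mem_biUnion ht hbt

theorem isMeagre_of_forall_isMeagre_slice [BaireSpace α] [BaireSpace β]
    [SecondCountableTopology β] {S : Set (α × β)} (hS : BaireMeasurableSet S)
    (h : ∀ a, IsMeagre {b | (a, b) ∈ S}) : IsMeagre S := by
  obtain ⟨U, hUo, hSU⟩ := hS.residualEq_isOpen
  suffices U = ∅ from eventuallyEq_empty.1 (this ▸ hSU)
  by_contra hU
  obtain ⟨⟨a₀, b₀⟩, hab⟩ := nonempty_iff_ne_empty.2 hU
  obtain ⟨A, O, hA, hO, ha₀, hb₀, hAO⟩ := isOpen_prod_iff.1 hUo a₀ b₀ hab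
  set M := {p : α × β | (p ∈ S) = (p ∈ U)}ᶜ
  have hM : IsMeagre M := by rw [IsMeagre, compl_compl]; exact hSU
  obtain ⟨a, haA, haM⟩ := (dense_of_mem_residual hM.eventually_residual_slice).inter_open_nonempty
    A hA ⟨a₀, ha₀⟩
  refine not_isMeagre_of_isOpen hO ⟨b₀, hb₀⟩ (((h a).union haM).mono fun b hb => ?_)
  by_cases hbS : (a, b) ∈ S
  · exact Or.inl hbS
  · exact Or.inr fun hSU' => hbS (hSU' ▸ hAO ⟨haA, hb⟩)

end KuratowskiUlam

theorem Homeomorph.isMeagre_preimage {X Y : Type*} [TopologicalSpace X] [TopologicalSpace Y]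
    (e : X ≃ₜ Y) {s : Set Y} : IsMeagre (e ⁻¹' s) ↔ IsMeagre s := by
  refine ⟨fun h => ?_, fun h => h.preimage_of_isOpenMap e.continuous e.isOpenMap⟩
  simpa [← preimage_comp] using h.preimage_of_isOpenMap e.symm.continuous e.symm.isOpenMap

theorem BaireMeasurableSet.of_measurableSet_borel {X : Type*} [TopologicalSpace X] {s : Set X}
    (hs : MeasurableSet[borel X] s) : BaireMeasurableSet s := by
  borelize X
  exact hs.baireMeasurableSet

theorem HaarMeager.isMeagre {X : Type*} [AddCommGroup X] [TopologicalSpace X]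
    [IsTopologicalAddGroup X] [BaireSpace X] [SecondCountableTopology X] {A : Set X}
    (hA : HaarMeager A) : IsMeagre A := by
  obtain ⟨B, hAB, hB, K, _, _, _, f, hf, hmeagre⟩ := hA
  -- The slices of `S` over `z` are the meagre sets `f ⁻¹' (B + {-z})`, those over `k` are
  -- translates of `B`.
  set S : Set (X × K) := (fun p => f p.2 + p.1) ⁻¹' B
  have hSbm : BaireMeasurableSet S := .of_measurableSet_borel <|
    ((hf.comp continuous_snd).add continuous_fst).borel_measurable hB
  have hS : IsMeagre S := by
    refine isMeagre_of_forall_isMeagre_slice hSbm fun z => ?_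
    convert hmeagre (-z) using 1
    ext k
    simp [S, add_singleton, image_add_right]
  have hS' : IsMeagre (Prod.swap ⁻¹' S : Set (K × X)) :=
    (Homeomorph.prodComm K X).isMeagre_preimage.2 hS
  obtain ⟨k, hk⟩ := (dense_of_mem_residual hS'.eventually_residual_slice).nonempty
  exact ((Homeomorph.addLeft (f k)).isMeagre_preimage.1 hk).mono hAB

theorem DMeasurable.baireMeasurableSet {X : Type*} [AddCommGroup X] [TopologicalSpace X]
    [IsTopologicalAddGroup X] [BaireSpace X] [SecondCountableTopology X] {V : Set X}
    (hV : DMeasurable V) : BaireMeasurableSet V := by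
  obtain ⟨B, M, hB, hM, rfl⟩ := hV
  exact (BaireMeasurableSet.of_measurableSet_borel hB).union hM.isMeagre.baireMeasurableSet

/-- Pettis' theorem. -/
theorem BaireMeasurableSet.sub_mem_nhds_zero {G : Type*} [AddGroup G] [TopologicalSpace G]
    [IsTopologicalAddGroup G] [BaireSpace G] {s : Set G} (hs : BaireMeasurableSet s)
    (hs' : ¬IsMeagre s) : s - s ∈ 𝓝 0 := by
  obtain ⟨U, hUo, hsU⟩ := hs.residualEq_isOpen
  obtain ⟨u, hu⟩ : U.Nonempty := by
    rcases U.eq_empty_or_nonempty with rfl | hU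
    · exact absurd (eventuallyEq_empty.1 hsU) hs'
    · exact hU
  refine mem_of_superset (hUo.sub_right.mem_nhds ⟨u, hu, u, hu, sub_self u⟩) ?_
  rintro _ ⟨u₁, hu₁, u₂, hu₂, rfl⟩
  set z := u₁ - u₂
  -- `z ∈ s - s` iff `s ∩ (z + s)` is nonempty, and up to a meagre set this is the open set
  -- `U ∩ (z + U)`, which contains `u₁`.
  have hshift : (s ∩ (-z + ·) ⁻¹' s : Set G) =ᵇ (U ∩ (-z + ·) ⁻¹' U : Set G) :=
    hsU.inter (hsU.comp_tendsto (tendsto_residual_of_isOpenMap (continuous_const_add (-z))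
      (Homeomorph.addLeft (-z)).isOpenMap))
  have hUz : ¬IsMeagre (U ∩ (-z + ·) ⁻¹' U) :=
    not_isMeagre_of_isOpen (hUo.inter (hUo.preimage (continuous_const_add (-z))))
      ⟨u₁, hu₁, by simpa [z] using hu₂⟩
  obtain ⟨x, hx, hxz⟩ : (s ∩ (-z + ·) ⁻¹' s).Nonempty := by
    refine nonempty_of_not_isMeagre fun h => hUz ?_
    exact eventuallyEq_empty.1 (hshift.symm.trans (eventuallyEq_empty.2 h))
  refine ⟨x, hx, -z + x, hxz, ?_⟩
  show x - (-z + x) = z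
  rw [sub_eq_add_neg, neg_add_rev, neg_neg, add_neg_cancel_left]

theorem not_isMeagre_of_forall_exists_pow_smul_mem {G₀ X : Type*} [GroupWithZero G₀]
    [TopologicalSpace X] [Nonempty X] [BaireSpace X] [MulAction G₀ X] [ContinuousConstSMul G₀ X]
    {c : G₀} (hc : c ≠ 0) {W : Set X} (hW : ∀ x, ∃ n : ℕ, c ^ n • x ∈ W) : ¬IsMeagre W := by
  intro hWm
  refine not_isMeagre_of_isOpen isOpen_univ univ_nonempty ((isMeagre_iUnion fun n =>
    hWm.preimage_of_isOpenMap (continuous_const_smul (c ^ n)) (isOpenMap_smul₀ (pow_ne_zero n hc))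
    ).mono fun x _ => mem_iUnion.2 (hW x))

theorem inv_two_pow_mem_Q2 (n : ℕ) : (2⁻¹ : ℝ) ^ n ∈ Q2 :=
  ⟨1, n, by simp⟩

theorem neg_mem_Q2 {ρ : ℝ} (hρ : ρ ∈ Q2) : -ρ ∈ Q2 := by
  obtain ⟨n, m, rfl⟩ := hρ
  exact ⟨-n, m, by push_cast; ring⟩

section Q2Internal

variable {X : Type*} [AddCommGroup X] [Module ℝ X] {V : Set X} {x₀ : X}

theorem Q2Internal.exists_pow_smul_mem (h : Q2Internal V x₀) (x : X) :
    ∃ n : ℕ, x₀ + (2⁻¹ : ℝ) ^ n • x ∈ V ∧ x₀ - (2⁻¹ : ℝ) ^ n • x ∈ V := by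
  obtain ⟨ε, hε, hρ⟩ := h.2 x
  obtain ⟨n, hn⟩ := exists_pow_lt_of_lt_one hε (by norm_num : (2⁻¹ : ℝ) < 1)
  have hpos : (0 : ℝ) < 2⁻¹ ^ n := by positivity
  refine ⟨n, hρ _ (inv_two_pow_mem_Q2 n) ⟨by linarith, hn⟩, ?_⟩
  simpa [sub_eq_add_neg] using
    hρ _ (neg_mem_Q2 (inv_two_pow_mem_Q2 n)) ⟨by linarith, by linarith⟩

theorem q2Internal_of_mem_nhds [TopologicalSpace X] [ContinuousAdd X] [ContinuousSMul ℝ X]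
    (h : V ∈ 𝓝 x₀) : Q2Internal V x₀ := by
  refine ⟨mem_of_mem_nhds h, fun x => ?_⟩
  have hline : ∀ᶠ ρ : ℝ in 𝓝 0, x₀ + ρ • x ∈ V :=
    (Continuous.tendsto' (by fun_prop) 0 x₀ (by simp)).eventually h
  obtain ⟨ε, hε, hball⟩ := Metric.eventually_nhds_iff.1 hline
  exact ⟨ε, hε, fun ρ _ hρ => hball (by rwa [Real.dist_0_eq_abs, abs_lt])⟩

theorem Q2Internal.mem_nhds [TopologicalSpace X] [IsTopologicalAddGroup X]
    [ContinuousConstSMul ℝ X] [BaireSpace X] (hV : BaireMeasurableSet V)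
    (hmid : ∀ v₁ ∈ V, ∀ v₂ ∈ V, (1 / 2 : ℝ) • (v₁ + v₂) ∈ V) (h : Q2Internal V x₀) :
    V ∈ 𝓝 x₀ := by
  set W : Set X := (x₀ + ·) ⁻¹' V ∩ (x₀ - ·) ⁻¹' V
  have hWbm : BaireMeasurableSet W :=
    (hV.preimage (Homeomorph.addLeft x₀).continuous (Homeomorph.addLeft x₀).isOpenMap).inter
      (hV.preimage (Homeomorph.subLeft x₀).continuous (Homeomorph.subLeft x₀).isOpenMap)
  have hWnm : ¬IsMeagre W :=
    not_isMeagre_of_forall_exists_pow_smul_mem (by norm_num) h.exists_pow_smul_mem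
  have hsub : (fun y => (2 : ℝ) • (y - x₀)) ⁻¹' (W - W) ⊆ V := by
    rintro y ⟨w₁, ⟨hw₁, -⟩, w₂, ⟨-, hw₂⟩, hy⟩
    have hy' : y = (1 / 2 : ℝ) • ((x₀ + w₁) + (x₀ - w₂)) := by
      simp only at hy
      calc y = x₀ + (1 / 2 : ℝ) • ((2 : ℝ) • (y - x₀)) := by module
        _ = _ := by rw [← hy]; module
    exact hy' ▸ hmid _ hw₁ _ hw₂
  have hto : Tendsto (fun y => (2 : ℝ) • (y - x₀)) (𝓝 x₀) (𝓝 0) :=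
    Continuous.tendsto' (by fun_prop) x₀ 0 (by simp)
  exact mem_of_superset (hto (hWbm.sub_mem_nhds_zero hWnm)) hsub

end Q2Internal

theorem isOpen_q2Internal_points_general
    (X : Type*) [AddCommGroup X] [Module ℝ X] [TopologicalSpace X]
    [IsTopologicalAddGroup X] [ContinuousSMul ℝ X] [PolishSpace X]
    (V : Set X) (hV : DMeasurable V)
    (hmid : ∀ v₁ ∈ V, ∀ v₂ ∈ V, (1 / 2 : ℝ) • (v₁ + v₂) ∈ V) :
    IsOpen {x₀ : X | Q2Internal V x₀} := by
  have hint : {x₀ : X | Q2Internal V x₀} = interior V := by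
    ext x₀
    rw [mem_interior_iff_mem_nhds]
    exact ⟨Q2Internal.mem_nhds hV.baireMeasurableSet hmid, q2Internal_of_mem_nhds⟩
  exact hint ▸ isOpen_interior

theorem isOpen_q2Internal_points
    (X : Type*) [AddCommGroup X] [Module ℝ X] [TopologicalSpace X]
    [IsTopologicalAddGroup X] [ContinuousSMul ℝ X] [PolishSpace X]
    (D : Set X) (hD : IsOpen D) (hDc : Convex ℝ D) (hDne : D.Nonempty)
    (V : Set X) (hVD : V ⊆ D) (hV : DMeasurable V)
    (hmid : ∀ v₁ ∈ V, ∀ v₂ ∈ V, (1 / 2 : ℝ) • (v₁ + v₂) ∈ V) :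
    IsOpen {x₀ : X | Q2Internal V x₀} :=
  isOpen_q2Internal_points_general X V hV hmid
end
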